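/- Set a = n − m, and let s, t be integers with t < a < s (a vertex of type 7^a). Let M be the matrix with rows (1, 0, j), (x, 1, k), (0, 0, 1), where j ∈ 𝒪/𝒫^{-t}, k ∈ 𝒪/𝒫^{s-t}, and x ∈ 𝒫^{a+1}/𝒫^{s}. Then M represents a γ-fixed point at the vertex (s,t) if and only if v(j) ≥ −t − m, v(x) ≥ s − m, and x·j·(1 − u₁/u₃) + k·(u₂/u₃ − 1) ∈ 𝒫^{s-t}. -/

import Mathlib

noncomputable section

/-- The element π of F = K((π)). -/
def pp (K : Type*) [Field K] : LaurentSeries K := HahnSeries.single (1 : ℤ) (1 : K)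

/-- The π-adic valuation on F = K((π)), with v(0) = ⊤. -/
def vv {K : Type*} [Field K] (x : LaurentSeries K) : WithTop ℤ := x.orderTop

/-- x ∈ 𝒫^r, i.e. v(x) ≥ r. -/
def inP {K : Type*} [Field K] (r : ℤ) (x : LaurentSeries K) : Prop := (r : WithTop ℤ) ≤ vv x

/-- x ∈ 𝒫^r/𝒫^{r'} : x is a polynomial x_r π^r + ⋯ + x_{r'-1} π^{r'-1} (possibly 0). -/
def inPQ {K : Type*} [Field K] (r r' : ℤ) (x : LaurentSeries K) : Prop :=
  inP r x ∧ ∀ i : ℤ, r' ≤ i → x.coeff i = 0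

/-- Membership in GL₃(𝒪): entries in 𝒪 and determinant a unit of 𝒪. -/
def inGLO {K : Type*} [Field K] (C : Matrix (Fin 3) (Fin 3) (LaurentSeries K)) : Prop :=
  (∀ i j, inP 0 (C i j)) ∧ vv C.det = 0

/-- The matrix x_{(s,t)} = diag(1, π^s, π^t). -/
def xst (K : Type*) [Field K] (s t : ℤ) : Matrix (Fin 3) (Fin 3) (LaurentSeries K) :=
  Matrix.diagonal ![1, pp K ^ s, pp K ^ t]

/-- Membership in the subgroup I^a of GL₃(F). -/
def inIa {K : Type*} [Field K] (a : ℤ) (g : Matrix (Fin 3) (Fin 3) (LaurentSeries K)) : Prop :=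
  g.det ≠ 0 ∧
  vv (g 0 0) = 0 ∧ vv (g 1 1) = 0 ∧ vv (g 2 2) = 0 ∧
  inP (-a) (g 0 1) ∧ inP (-a) (g 0 2) ∧ inP 0 (g 1 2) ∧
  inP (a + 1) (g 1 0) ∧ inP (a + 1) (g 2 0) ∧ inP 1 (g 2 1)

/-- Membership in x_{(s,t)}·GL₃(𝒪)·x_{(s,t)}⁻¹. -/
def inConj {K : Type*} [Field K] (s t : ℤ) (g : Matrix (Fin 3) (Fin 3) (LaurentSeries K)) : Prop :=
  ∃ C, inGLO C ∧ g = xst K s t * C * (xst K s t)⁻¹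

/-- M represents a γ-fixed point at the vertex (s,t): there is C ∈ GL₃(𝒪) with
γ·M·x_{(s,t)} = M·x_{(s,t)}·C. -/
def reprFixed {K : Type*} [Field K] (γ M : Matrix (Fin 3) (Fin 3) (LaurentSeries K))
    (s t : ℤ) : Prop :=
  ∃ C, inGLO C ∧ γ * (M * xst K s t) = M * xst K s t * C

/-!
Since g = M·x_{(s,t)} is invertible, the only candidate is C = g⁻¹γg, so the fixed-point condition
says exactly that this conjugate lies in GL₃(𝒪). It has diagonal u₁, u₂, u₃, and its only nonzero
off-diagonal entries are j(u₁ − u₃)π^t, x(u₂ − u₁)π^{−s} and u₃(xj(1 − u₁/u₃) + k(u₂/u₃ − 1))π^{t−s}.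
As u₁ − u₃ and u₂ − u₁ have valuation m, integrality of these entries is the three stated conditions.
-/

section

variable {K : Type*} [Field K]

lemma vv_mul (x y : LaurentSeries K) : vv (x * y) = vv x + vv y :=
  HahnSeries.orderTop_mul x y

lemma vv_sub_comm (x y : LaurentSeries K) : vv (x - y) = vv (y - x) := by
  rw [← neg_sub, vv, HahnSeries.orderTop_neg, vv]

lemma ne_zero_of_vv_eq_zero {u : LaurentSeries K} (hu : vv u = 0) : u ≠ 0 := by
  rintro rfl
  simp [vv] at hu

lemma pp_ne_zero : pp K ≠ 0 := by
  simp [pp]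

lemma vv_pp_zpow (r : ℤ) : vv (pp K ^ r) = r := by
  rw [pp, ← RatFunc.single_zpow]
  exact HahnSeries.orderTop_single one_ne_zero

lemma vv_sub_eq_vv_one_sub_div {u w : LaurentSeries K} (hw : vv w = 0) :
    vv (w - u) = vv (1 - u / w) := by
  have hw0 := ne_zero_of_vv_eq_zero hw
  rw [show w - u = w * (1 - u / w) by field_simp, vv_mul, hw, zero_add]

lemma inP_zero_of_vv_eq_zero {u : LaurentSeries K} (hu : vv u = 0) : inP 0 u :=
  hu.symm.le

lemma inP_mul_iff {y w : LaurentSeries K} {c : ℤ} (hw : vv w = c) (r : ℤ) :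
    inP r (y * w) ↔ inP (r - c) y := by
  unfold inP
  rw [vv_mul, hw]
  cases vv y with
  | top => simp
  | coe v => norm_cast; omega

lemma inGLO_iff_of_vv_diag_eq_zero {u₁ u₂ u₃ : LaurentSeries K} (hu₁ : vv u₁ = 0) (hu₂ : vv u₂ = 0)
    (hu₃ : vv u₃ = 0) (A B D : LaurentSeries K) :
    inGLO !![u₁, 0, A; B, u₂, D; 0, 0, u₃] ↔ inP 0 A ∧ inP 0 B ∧ inP 0 D := by
  have h0 : inP 0 (0 : LaurentSeries K) := by simp [inP, vv]
  have hdet : vv (!![u₁, 0, A; B, u₂, D; 0, 0, u₃]).det = 0 := by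
    rw [Matrix.det_fin_three]
    simp [vv_mul, hu₁, hu₂, hu₃]
  refine ⟨fun ⟨hC, _⟩ => ⟨by simpa using hC 0 2, by simpa using hC 1 0, by simpa using hC 1 2⟩,
    fun ⟨hA, hB, hD⟩ => ⟨fun i l => ?_, hdet⟩⟩
  fin_cases i <;> fin_cases l <;>
    simp [hA, hB, hD, h0, inP_zero_of_vv_eq_zero, hu₁, hu₂, hu₃]

lemma xst_eq (s t : ℤ) : xst K s t = !![1, 0, 0; 0, pp K ^ s, 0; 0, 0, pp K ^ t] := by
  refine Matrix.ext fun i l => ?_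
  fin_cases i <;> fin_cases l <;> rfl

lemma det_xst (s t : ℤ) : (xst K s t).det = pp K ^ s * pp K ^ t := by
  simp [xst, Matrix.det_diagonal, Fin.prod_univ_three]

lemma isUnit_det_mul_xst (j k x : LaurentSeries K) (s t : ℤ) :
    IsUnit (!![1, 0, j; x, 1, k; 0, 0, 1] * xst K s t).det := by
  rw [Matrix.det_mul, det_xst, Matrix.det_fin_three]
  simpa using ⟨zpow_ne_zero s pp_ne_zero, zpow_ne_zero t pp_ne_zero⟩

lemma reprFixed_iff_inGLO {γ M C : Matrix (Fin 3) (Fin 3) (LaurentSeries K)} {s t : ℤ}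
    (hg : IsUnit (M * xst K s t).det) (hC : γ * (M * xst K s t) = M * xst K s t * C) :
    reprFixed γ M s t ↔ inGLO C := by
  have hg' := (Matrix.isUnit_iff_isUnit_det _).mpr hg
  refine ⟨fun ⟨C', hC', h⟩ => ?_, fun h => ⟨C, h, hC⟩⟩
  rwa [hg'.mul_left_cancel (h.symm.trans hC)] at hC'

lemma diagonal_mul_eq_mul_conj {u₁ u₂ u₃ : LaurentSeries K} (hu₃ : u₃ ≠ 0)
    (j k x : LaurentSeries K) (s t : ℤ) :
    Matrix.diagonal ![u₁, u₂, u₃] * (!![1, 0, j; x, 1, k; 0, 0, 1] * xst K s t) =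
      !![1, 0, j; x, 1, k; 0, 0, 1] * xst K s t *
        !![u₁, 0, j * ((u₁ - u₃) * pp K ^ t);
           x * ((u₂ - u₁) * pp K ^ (-s)), u₂,
             (x * j * (1 - u₁ / u₃) + k * (u₂ / u₃ - 1)) * (u₃ * pp K ^ (t - s));
           0, 0, u₃] := by
  have hs : pp K ^ s ≠ 0 := zpow_ne_zero s pp_ne_zero
  rw [zpow_neg, zpow_sub₀ pp_ne_zero]
  refine Matrix.ext fun i l => ?_
  fin_cases i <;> fin_cases l <;>
    simp [xst_eq, Matrix.mul_apply, Fin.sum_univ_three] <;>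
    field_simp <;> ring

end

theorem stmt17_general (K : Type*) [Field K]
    (u₁ u₂ u₃ : LaurentSeries K) (m : ℤ)
    (hu₁ : vv u₁ = 0) (hu₂ : vv u₂ = 0) (hu₃ : vv u₃ = 0)
    (hv₁₂ : vv (1 - u₁ / u₂) = (m : WithTop ℤ))
    (hv₁₃ : vv (1 - u₁ / u₃) = (m : WithTop ℤ))
    (s t : ℤ)
    (j k x : LaurentSeries K) :
    reprFixed (Matrix.diagonal ![u₁, u₂, u₃]) !![1, 0, j; x, 1, k; 0, 0, 1] s t ↔
      (((-t - m : ℤ) : WithTop ℤ) ≤ vv j ∧ ((s - m : ℤ) : WithTop ℤ) ≤ vv x ∧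
        inP (s - t) (x * j * (1 - u₁ / u₃) + k * (u₂ / u₃ - 1))) := by
  have h02 : vv ((u₁ - u₃) * pp K ^ t) = ((m + t : ℤ) : WithTop ℤ) := by
    rw [vv_mul, vv_sub_comm, vv_sub_eq_vv_one_sub_div hu₃, hv₁₃, vv_pp_zpow]; rfl
  have h10 : vv ((u₂ - u₁) * pp K ^ (-s)) = ((m - s : ℤ) : WithTop ℤ) := by
    rw [vv_mul, vv_sub_eq_vv_one_sub_div hu₂, hv₁₂, vv_pp_zpow]; rfl
  have h12 : vv (u₃ * pp K ^ (t - s)) = ((t - s : ℤ) : WithTop ℤ) := by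
    rw [vv_mul, hu₃, vv_pp_zpow, zero_add]
  rw [reprFixed_iff_inGLO (isUnit_det_mul_xst j k x s t)
      (diagonal_mul_eq_mul_conj (ne_zero_of_vv_eq_zero hu₃) j k x s t),
    inGLO_iff_of_vv_diag_eq_zero hu₁ hu₂ hu₃, inP_mul_iff h02, inP_mul_iff h10, inP_mul_iff h12]
  simp only [inP, show (0 : ℤ) - (m + t) = -t - m by ring, show (0 : ℤ) - (m - s) = s - m by ring,
    show (0 : ℤ) - (t - s) = s - t by ring]

theorem stmt17 (K : Type*) [Field K]
    (u₁ u₂ u₃ : LaurentSeries K) (m n : ℤ)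
    (hu₁ : vv u₁ = 0) (hu₂ : vv u₂ = 0) (hu₃ : vv u₃ = 0)
    (h₁₂ : u₁ ≠ u₂) (h₁₃ : u₁ ≠ u₃) (h₂₃ : u₂ ≠ u₃)
    (hm : 0 ≤ m) (hmn : m ≤ n)
    (hv₁₂ : vv (1 - u₁ / u₂) = (m : WithTop ℤ))
    (hv₁₃ : vv (1 - u₁ / u₃) = (m : WithTop ℤ))
    (hv₂₃ : vv (1 - u₂ / u₃) = (n : WithTop ℤ))
    (a s t : ℤ) (ha : a = n - m) (hta : t < a) (has : a < s)
    (j k x : LaurentSeries K) (hj : inPQ 0 (-t) j) (hk : inPQ 0 (s - t) k)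
    (hx : inPQ (a + 1) s x) :
    reprFixed (Matrix.diagonal ![u₁, u₂, u₃]) !![1, 0, j; x, 1, k; 0, 0, 1] s t ↔
      (((-t - m : ℤ) : WithTop ℤ) ≤ vv j ∧ ((s - m : ℤ) : WithTop ℤ) ≤ vv x ∧
        inP (s - t) (x * j * (1 - u₁ / u₃) + k * (u₂ / u₃ - 1))) :=
  stmt17_general K u₁ u₂ u₃ m hu₁ hu₂ hu₃ hv₁₂ hv₁₃ s t j k x
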